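/- arXiv:1011.6605 — 9 statements merged into one kernel-verified Lean document; each statement's English description precedes it below -/
import Mathlib

section
/- Let A₁,…,Aₙ, B₁,…,Bₙ be bounded operators on a complex Hilbert space and let α : Fin n × Fin n → ℂ satisfy conj(α(i,j))·α(j,i) = 1 for all i,j. Then ∑_{i,j} |α(i,j)A_i − α(j,i)A_j|² + ∑_{i,j} |α(i,j)B_i − α(j,i)B_j|² = 2∑_{i,j} |α(i,j)A_i − α(j,i)B_j|² − 2|∑_i (A_i − B_i)|². -/
open ContinuousLinearMap

private lemma key_sum_identity {M : Type*} [AddCommGroup M] [Module ℂ M] {n : ℕ}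
    (f g h k : Fin n → Fin n → M) (p : Fin n → Fin n → ℂ) :
    (∑ i, ∑ j, (p i j • f i i - f i j - f j i + p j i • f j j))
      + (∑ i, ∑ j, (p i j • g i i - g i j - g j i + p j i • g j j))
      = 2 • (∑ i, ∑ j, (p i j • f i i - h i j - k j i + p j i • g j j))
        - 2 • (∑ i, ∑ j, (f i j - h i j - k i j + g i j)) := by
  have swap : ∀ F : Fin n → Fin n → M, (∑ i, ∑ j, F i j) = ∑ i, ∑ j, F j i :=
    fun _ => Finset.sum_comm
  simp only [Finset.sum_add_distrib, Finset.sum_sub_distrib, smul_sub, smul_add, two_smul]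
  rw [swap (fun i j => p j i • f j j), swap (fun i j => f j i),
      swap (fun i j => g j i), swap (fun i j => p i j • g i i),
      swap (fun i j => k j i)]
  abel

theorem operator_parallelogram_alpha
    {E : Type*} [NormedAddCommGroup E] [InnerProductSpace ℂ E] [CompleteSpace E]
    {n : ℕ} (A B : Fin n → (E →L[ℂ] E)) (α : Fin n × Fin n → ℂ)
    (hα : ∀ i j, (starRingEnd ℂ) (α (i, j)) * α (j, i) = 1) :
    (∑ i, ∑ j, adjoint (α (i, j) • A i - α (j, i) • A j) * (α (i, j) • A i - α (j, i) • A j))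
      + (∑ i, ∑ j, adjoint (α (i, j) • B i - α (j, i) • B j) * (α (i, j) • B i - α (j, i) • B j))
      = 2 • (∑ i, ∑ j, adjoint (α (i, j) • A i - α (j, i) • B j) * (α (i, j) • A i - α (j, i) • B j))
        - 2 • (adjoint (∑ i, (A i - B i)) * (∑ i, (A i - B i))) := by
  simp only [← star_eq_adjoint]
  have expand : ∀ (c d : ℂ) (X Y : E →L[ℂ] E),
      star (c • X - d • Y) * (c • X - d • Y)
        = ((starRingEnd ℂ) c * c) • (star X * X) - ((starRingEnd ℂ) c * d) • (star X * Y)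
          - ((starRingEnd ℂ) d * c) • (star Y * X) + ((starRingEnd ℂ) d * d) • (star Y * Y) := by
    intro c d X Y
    simp only [star_sub, star_smul, RCLike.star_def, sub_mul, mul_sub,
      smul_mul_assoc, mul_smul_comm]
    module
  have expand2 : star (∑ i, (A i - B i)) * (∑ i, (A i - B i))
      = ∑ i, ∑ j, (star (A i) * A j - star (A i) * B j - star (B i) * A j + star (B i) * B j) := by
    rw [star_sum, Finset.sum_mul_sum]
    refine Finset.sum_congr rfl fun i _ => Finset.sum_congr rfl fun j _ => ?_
    simp only [star_sub, sub_mul, mul_sub]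
    abel
  simp only [expand, expand2, hα, one_smul]
  exact key_sum_identity (fun i j => star (A i) * A j) (fun i j => star (B i) * B j)
    (fun i j => star (A i) * B j) (fun i j => star (B i) * A j)
    (fun i j => (starRingEnd ℂ) (α (i, j)) * α (i, j))
end

section
/- Let A₁,…,Aₙ, B₁,…,Bₙ be bounded operators on a complex Hilbert space and r₁,…,rₙ positive reals. Then ∑_{i<j} |√(rᵢ/rⱼ)Aᵢ − √(rⱼ/rᵢ)Aⱼ|² + ∑_{i<j} |√(rᵢ/rⱼ)Bᵢ − √(rⱼ/rᵢ)Bⱼ|² = ∑_{i,j=1}^n |√(rᵢ/rⱼ)Aᵢ − √(rⱼ/rᵢ)Bⱼ|² − |∑_{i=1}^n (Aᵢ − Bᵢ)|². -/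
/-!
Expanding with `c * d = 1` gives `|c x - d y|² = c² x*x + d² y*y - (x*y + y*x)`. Put
`W(x) = ∑_{i,j} c_ij² x_i* x_i` and `S(x) = ∑_i x_i`. Pairing `(i, j)` with `(j, i)`, and using
that the diagonal terms `c_ii² x_i* x_i - x_i* x_i` vanish, the sum over `i < j` of
`|c_ij x_i - c_ji x_j|²` is `W(x) - |S(x)|²`; the full double sum of `|c_ij A_i - c_ji B_j|²` is
`W(A) + W(B) - (S(A)* S(B) + S(B)* S(A))`. Both sides of the identity are thus
`W(A) - |S(A)|² + W(B) - |S(B)|²`.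
-/

open Finset

theorem Finset.sum_sum_eq_sum_diag_add_sum_lt {ι M : Type*} [Fintype ι] [LinearOrder ι]
    [AddCommMonoid M] (f : ι → ι → M) :
    ∑ i, ∑ j, f i j = ∑ i, f i i + ∑ i, ∑ j ∈ univ.filter (i < ·), (f i j + f j i) := by
  have row (i : ι) :
      ∑ j, f i j = f i i + ∑ j ∈ univ.filter (i < ·), f i j + ∑ j ∈ univ.filter (· < i), f i j := by
    have below : (univ.filter (¬ i < ·)).erase i = univ.filter (· < i) := by
      ext j; simp only [mem_erase, mem_filter, mem_univ, true_and, not_lt]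
      exact ⟨fun h => lt_of_le_of_ne h.2 h.1, fun h => ⟨h.ne, h.le⟩⟩
    rw [← sum_filter_add_sum_filter_not univ (i < ·),
      ← add_sum_erase (univ.filter (¬ i < ·)) (f i) (a := i) (by simp), below]
    abel
  have swap : ∑ i, ∑ j ∈ univ.filter (· < i), f i j = ∑ i, ∑ j ∈ univ.filter (i < ·), f j i :=
    sum_comm' fun i j => by simp
  simp only [row, sum_add_distrib, swap, add_assoc]

section WeightedParallelogram

variable {𝕜 R ι : Type*} [CommSemiring 𝕜] [StarRing 𝕜] [Ring R] [StarRing R] [Algebra 𝕜 R]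
  [StarModule 𝕜 R]

theorem star_smul_sub_smul_mul_self {c d : 𝕜} (hc : IsSelfAdjoint c) (hd : IsSelfAdjoint d)
    (hcd : c * d = 1) (x y : R) :
    star (c • x - d • y) * (c • x - d • y)
      = (c * c) • (star x * x) + (d * d) • (star y * y) - (star x * y + star y * x) := by
  have hdc : d * c = 1 := mul_comm d c ▸ hcd
  simp only [star_sub, star_smul, hc.star_eq, hd.star_eq, sub_mul, mul_sub, smul_mul_smul_comm,
    hcd, hdc, one_smul]
  abel

variable [Fintype ι] {c : ι → ι → 𝕜}

theorem sum_filter_lt_star_smul_sub_smul_mul_self [LinearOrder ι] (hc : ∀ i j, IsSelfAdjoint (c i j))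
    (hcc : ∀ i j, c i j * c j i = 1) (x : ι → R) :
    ∑ i, ∑ j ∈ univ.filter (i < ·), star (c i j • x i - c j i • x j) * (c i j • x i - c j i • x j)
      = ∑ i, ∑ j, (c i j * c i j) • (star (x i) * x i) - star (∑ i, x i) * ∑ i, x i := by
  rw [star_sum, sum_mul_sum, ← sum_sub_distrib]
  simp_rw [← sum_sub_distrib]
  rw [sum_sum_eq_sum_diag_add_sum_lt]
  simp only [hcc, one_smul, sub_self, sum_const_zero, zero_add,
    star_smul_sub_smul_mul_self (hc _ _) (hc _ _) (hcc _ _)]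
  refine sum_congr rfl fun i _ => sum_congr rfl fun j _ => ?_
  abel

theorem sum_sum_star_smul_sub_smul_mul_self (hc : ∀ i j, IsSelfAdjoint (c i j))
    (hcc : ∀ i j, c i j * c j i = 1) (x y : ι → R) :
    ∑ i, ∑ j, star (c i j • x i - c j i • y j) * (c i j • x i - c j i • y j)
      = ∑ i, ∑ j, (c i j * c i j) • (star (x i) * x i)
        + ∑ i, ∑ j, (c i j * c i j) • (star (y i) * y i)
        - (star (∑ i, x i) * ∑ i, y i + star (∑ i, y i) * ∑ i, x i) := by
  simp only [star_smul_sub_smul_mul_self (hc _ _) (hc _ _) (hcc _ _), star_sum, sum_mul_sum,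
    sum_sub_distrib, sum_add_distrib]
  rw [sum_comm (f := fun i j => (c j i * c j i) • (star (y j) * y j)),
    sum_comm (f := fun i j => star (y j) * x i)]

theorem weighted_parallelogram [LinearOrder ι] (hc : ∀ i j, IsSelfAdjoint (c i j))
    (hcc : ∀ i j, c i j * c j i = 1) (x y : ι → R) :
    ∑ i, ∑ j ∈ univ.filter (i < ·), star (c i j • x i - c j i • x j) * (c i j • x i - c j i • x j)
      + ∑ i, ∑ j ∈ univ.filter (i < ·), star (c i j • y i - c j i • y j) * (c i j • y i - c j i • y j)
      = ∑ i, ∑ j, star (c i j • x i - c j i • y j) * (c i j • x i - c j i • y j)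
        - star (∑ i, (x i - y i)) * ∑ i, (x i - y i) := by
  rw [sum_filter_lt_star_smul_sub_smul_mul_self hc hcc, sum_filter_lt_star_smul_sub_smul_mul_self hc hcc,
    sum_sum_star_smul_sub_smul_mul_self hc hcc, sum_sub_distrib, star_sub, sub_mul, mul_sub, mul_sub]
  abel

end WeightedParallelogram

theorem Real.sqrt_div_mul_sqrt_div {a b : ℝ} (ha : 0 < a) (hb : 0 < b) :
    √(a / b) * √(b / a) = 1 := by
  rw [← Real.sqrt_mul (div_nonneg ha.le hb.le), div_mul_div_comm, mul_comm a,
    div_self (mul_pos hb ha).ne', Real.sqrt_one]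

open ContinuousLinearMap

theorem operator_weighted_parallelogram
    {E : Type*} [NormedAddCommGroup E] [InnerProductSpace ℂ E] [CompleteSpace E]
    {n : ℕ} (A B : Fin n → (E →L[ℂ] E)) (r : Fin n → ℝ) (hr : ∀ i, 0 < r i) :
    (∑ i, ∑ j ∈ Finset.univ.filter (fun j => i < j),
        adjoint ((Real.sqrt (r i / r j) : ℂ) • A i - (Real.sqrt (r j / r i) : ℂ) • A j)
          * ((Real.sqrt (r i / r j) : ℂ) • A i - (Real.sqrt (r j / r i) : ℂ) • A j))
      + (∑ i, ∑ j ∈ Finset.univ.filter (fun j => i < j),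
          adjoint ((Real.sqrt (r i / r j) : ℂ) • B i - (Real.sqrt (r j / r i) : ℂ) • B j)
            * ((Real.sqrt (r i / r j) : ℂ) • B i - (Real.sqrt (r j / r i) : ℂ) • B j))
      = (∑ i, ∑ j,
          adjoint ((Real.sqrt (r i / r j) : ℂ) • A i - (Real.sqrt (r j / r i) : ℂ) • B j)
            * ((Real.sqrt (r i / r j) : ℂ) • A i - (Real.sqrt (r j / r i) : ℂ) • B j))
        - adjoint (∑ i, (A i - B i)) * (∑ i, (A i - B i)) := by
  simp only [← star_eq_adjoint]
  refine weighted_parallelogram (fun i j => Complex.conj_ofReal _) (fun i j => ?_) A B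
  rw [← Complex.ofReal_mul, Real.sqrt_div_mul_sqrt_div (hr i) (hr j), Complex.ofReal_one]
end

section
/- Let A₁,…,Aₙ be bounded operators on a complex Hilbert space and r₁,…,rₙ positive reals with ∑ᵢ 1/rᵢ = 1. Then ∑_{i<j} |√(rᵢ/rⱼ)Aᵢ − √(rⱼ/rᵢ)Aⱼ|² = ∑ᵢ rᵢ|Aᵢ|² − |∑ᵢ Aᵢ|². -/
open ContinuousLinearMap

lemma half_sum {M : Type*} [AddCommGroup M] {n : ℕ} (f : Fin n → Fin n → M) :
    (∑ i, ∑ j ∈ Finset.univ.filter (fun j => i < j), (f i j + f j i))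
      = (∑ i, ∑ j, f i j) - ∑ i, f i i := by
  simp only [Finset.sum_filter]
  have h1 : (∑ i, ∑ j, if i < j then f i j + f j i else 0)
      = (∑ i, ∑ j, if i < j then f i j else 0)
        + ∑ i, ∑ j, if i < j then f j i else 0 := by
    rw [← Finset.sum_add_distrib]
    refine Finset.sum_congr rfl fun i _ => ?_
    rw [← Finset.sum_add_distrib]
    refine Finset.sum_congr rfl fun j _ => ?_
    split <;> simp
  rw [h1, Finset.sum_comm (f := fun i j => if i < j then f j i else 0)]
  have h2 : ∀ i j : Fin n, (if i < j then f i j else 0) + (if j < i then f i j else 0)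
      = f i j - (if j = i then f i j else 0) := by
    intro i j
    rcases lt_trichotomy i j with h | h | h
    · simp [h, h.ne', not_lt_of_gt h, sub_eq_add_neg]
    · simp [h, lt_irrefl]
    · simp [h, h.ne, not_lt_of_gt h]
  calc (∑ i, ∑ j, if i < j then f i j else 0) + ∑ i, ∑ j, (if j < i then f i j else 0)
      = ∑ i, ∑ j, ((if i < j then f i j else 0) + (if j < i then f i j else 0)) := by
        rw [← Finset.sum_add_distrib]
        exact Finset.sum_congr rfl fun i _ => (Finset.sum_add_distrib).symm
    _ = ∑ i, ∑ j, (f i j - if j = i then f i j else 0) := by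
        simp only [h2]
    _ = (∑ i, ∑ j, f i j) - ∑ i, f i i := by
        simp [Finset.sum_sub_distrib]

lemma expand_term {E : Type*} [NormedAddCommGroup E] [InnerProductSpace ℂ E] [CompleteSpace E]
    (X Y : E →L[ℂ] E) (a b : ℝ) :
    adjoint ((a:ℂ) • X - (b:ℂ) • Y) * ((a:ℂ) • X - (b:ℂ) • Y)
      = ((a*a : ℝ):ℂ) • (adjoint X * X) + ((b*b:ℝ):ℂ) • (adjoint Y * Y)
        - ((a*b:ℝ):ℂ) • (adjoint X * Y) - ((a*b:ℝ):ℂ) • (adjoint Y * X) := by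
  simp only [map_sub, map_smulₛₗ, Complex.conj_ofReal, sub_mul, mul_sub, smul_mul_assoc,
    mul_smul_comm, smul_smul, smul_sub, Complex.ofReal_mul]
  rw [mul_comm (b:ℂ) (a:ℂ)]
  abel

theorem operator_zhang_fujii
    {E : Type*} [NormedAddCommGroup E] [InnerProductSpace ℂ E] [CompleteSpace E]
    {n : ℕ} (A : Fin n → (E →L[ℂ] E)) (r : Fin n → ℝ) (hr : ∀ i, 0 < r i)
    (hsum : ∑ i, 1 / r i = 1) :
    (∑ i, ∑ j ∈ Finset.univ.filter (fun j => i < j),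
        adjoint ((Real.sqrt (r i / r j) : ℂ) • A i - (Real.sqrt (r j / r i) : ℂ) • A j)
          * ((Real.sqrt (r i / r j) : ℂ) • A i - (Real.sqrt (r j / r i) : ℂ) • A j))
      = (∑ i, (r i : ℂ) • (adjoint (A i) * A i)) - adjoint (∑ i, A i) * (∑ i, A i) := by
  set Y : Fin n → Fin n → (E →L[ℂ] E) :=
    fun i j => ((r i / r j : ℝ) : ℂ) • (adjoint (A i) * A i) - adjoint (A i) * A j with hY
  have key : ∀ i j : Fin n,
      adjoint ((Real.sqrt (r i / r j) : ℂ) • A i - (Real.sqrt (r j / r i) : ℂ) • A j)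
          * ((Real.sqrt (r i / r j) : ℂ) • A i - (Real.sqrt (r j / r i) : ℂ) • A j)
        = Y i j + Y j i := by
    intro i j
    have hij : (0:ℝ) ≤ r i / r j := div_nonneg (hr i).le (hr j).le
    have hji : (0:ℝ) ≤ r j / r i := div_nonneg (hr j).le (hr i).le
    have h1 : Real.sqrt (r i / r j) * Real.sqrt (r i / r j) = r i / r j :=
      Real.mul_self_sqrt hij
    have h2 : Real.sqrt (r j / r i) * Real.sqrt (r j / r i) = r j / r i :=
      Real.mul_self_sqrt hji
    have h3 : Real.sqrt (r i / r j) * Real.sqrt (r j / r i) = 1 := by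
      rw [← Real.sqrt_mul hij]
      have : r i / r j * (r j / r i) = 1 := by
        field_simp [mul_comm]
        exact div_self (mul_pos (hr i) (hr j)).ne'
      rw [this, Real.sqrt_one]
    rw [expand_term, h1, h2, h3, hY]
    push_cast
    simp only [one_smul]
    abel
  calc (∑ i, ∑ j ∈ Finset.univ.filter (fun j => i < j),
        adjoint ((Real.sqrt (r i / r j) : ℂ) • A i - (Real.sqrt (r j / r i) : ℂ) • A j)
          * ((Real.sqrt (r i / r j) : ℂ) • A i - (Real.sqrt (r j / r i) : ℂ) • A j))
      = ∑ i, ∑ j ∈ Finset.univ.filter (fun j => i < j), (Y i j + Y j i) := by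
        refine Finset.sum_congr rfl fun i _ => Finset.sum_congr rfl fun j _ => key i j
    _ = (∑ i, ∑ j, Y i j) - ∑ i, Y i i := half_sum Y
    _ = (∑ i, (r i : ℂ) • (adjoint (A i) * A i)) - adjoint (∑ i, A i) * (∑ i, A i) := by
        have hdiag : ∀ i, Y i i = 0 := by
          intro i
          have h0 : Y i i = ((r i / r i : ℝ) : ℂ) • (adjoint (A i) * A i)
              - adjoint (A i) * A i := rfl
          rw [h0, div_self (hr i).ne', Complex.ofReal_one, one_smul, sub_self]
        have hc : (∑ j, 1 / (r j : ℂ)) = 1 := by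
          have := congrArg (Complex.ofReal) hsum
          push_cast at this
          exact this
        have hrow : ∀ i, (∑ j, Y i j)
            = (r i : ℂ) • (adjoint (A i) * A i) - ∑ j, adjoint (A i) * A j := by
          intro i
          rw [hY]
          simp only
          rw [Finset.sum_sub_distrib, ← Finset.sum_smul]
          congr 2
          push_cast
          calc (∑ j, ((r i : ℂ) / (r j : ℂ)))
              = (r i : ℂ) * ∑ j, 1 / (r j : ℂ) := by
                rw [Finset.mul_sum]
                exact Finset.sum_congr rfl fun j _ => by rw [mul_one_div]
            _ = (r i : ℂ) := by rw [hc, mul_one]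
        simp only [hdiag, Finset.sum_const_zero, sub_zero]
        rw [Finset.sum_congr rfl (fun i _ => hrow i), Finset.sum_sub_distrib]
        congr 1
        rw [map_sum, Finset.sum_mul]
        exact Finset.sum_congr rfl fun i _ => by rw [Finset.mul_sum]
end

section
/- Let A₁,…,Aₙ be bounded operators on a complex Hilbert space and r₁,…,rₙ positive reals with ∑ᵢ 1/rᵢ = 1. Then |∑ᵢ Aᵢ|² ≤ ∑ᵢ rᵢ|Aᵢ|² in the Loewner order (i.e., the difference is a positive operator). -/
/-!
The quadratic form of the difference is `x ↦ ∑ rᵢ ‖Aᵢ x‖² - ‖∑ Aᵢ x‖²`, so the operator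
inequality reduces to the triangle inequality followed by the weighted Cauchy–Schwarz inequality
`(∑ aᵢ)² ≤ (∑ 1 / rᵢ) (∑ rᵢ aᵢ²)`.
-/

open ContinuousLinearMap

theorem Finset.sq_sum_le_sum_mul_sq {ι R : Type*} [Field R] [LinearOrder R] [IsStrictOrderedRing R]
    (s : Finset ι) (a : ι → R) {r : ι → R} (hr : ∀ i ∈ s, 0 < r i)
    (hsum : ∑ i ∈ s, 1 / r i = 1) :
    (∑ i ∈ s, a i) ^ 2 ≤ ∑ i ∈ s, r i * a i ^ 2 := by
  have h := sq_sum_div_le_sum_sq_div s a (g := fun i ↦ 1 / r i)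
    fun i hi ↦ one_div_pos.2 (hr i hi)
  rw [hsum, div_one] at h
  refine h.trans_eq (sum_congr rfl fun i _ ↦ ?_)
  rw [div_div_eq_mul_div, div_one, mul_comm]

namespace ContinuousLinearMap

variable {𝕜 E : Type*} [RCLike 𝕜] [NormedAddCommGroup E] [InnerProductSpace 𝕜 E]

theorem reApplyInnerSelf_sub (T U : E →L[𝕜] E) (x : E) :
    (T - U).reApplyInnerSelf x = T.reApplyInnerSelf x - U.reApplyInnerSelf x := by
  simp only [reApplyInnerSelf_apply, sub_apply, inner_sub_left, map_sub]

theorem reApplyInnerSelf_sum {ι : Type*} (s : Finset ι) (T : ι → E →L[𝕜] E) (x : E) :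
    (∑ i ∈ s, T i).reApplyInnerSelf x = ∑ i ∈ s, (T i).reApplyInnerSelf x := by
  simp only [reApplyInnerSelf_apply, sum_apply, sum_inner, map_sum]

theorem reApplyInnerSelf_ofReal_smul (c : ℝ) (T : E →L[𝕜] E) (x : E) :
    ((c : 𝕜) • T).reApplyInnerSelf x = c * T.reApplyInnerSelf x := by
  simp only [reApplyInnerSelf_apply, smul_apply, inner_smul_left, RCLike.conj_ofReal,
    RCLike.re_ofReal_mul]

theorem reApplyInnerSelf_adjoint_mul_self [CompleteSpace E] (B : E →L[𝕜] E) (x : E) :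
    (adjoint B * B).reApplyInnerSelf x = ‖B x‖ ^ 2 := by
  rw [reApplyInnerSelf_apply, mul_apply_eq_comp, adjoint_inner_left, inner_self_eq_norm_sq]

end ContinuousLinearMap

theorem operator_bohr_inequality
    {E : Type*} [NormedAddCommGroup E] [InnerProductSpace ℂ E] [CompleteSpace E]
    {n : ℕ} (A : Fin n → (E →L[ℂ] E)) (r : Fin n → ℝ) (hr : ∀ i, 0 < r i)
    (hsum : ∑ i, 1 / r i = 1) :
    ((∑ i, (r i : ℂ) • (adjoint (A i) * A i))
      - adjoint (∑ i, A i) * (∑ i, A i)).IsPositive := by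
  refine isPositive_def'.2 ⟨?_, fun x ↦ ?_⟩
  · simp only [IsSelfAdjoint, star_sub, star_sum, star_smul, star_mul, star_eq_adjoint,
      adjoint_adjoint, map_sum, Complex.star_def, Complex.conj_ofReal]
  · simp only [← RCLike.ofReal_eq_complex_ofReal, reApplyInnerSelf_sub, reApplyInnerSelf_sum,
      reApplyInnerSelf_ofReal_smul, reApplyInnerSelf_adjoint_mul_self, sub_nonneg, sum_apply]
    calc ‖∑ i, A i x‖ ^ 2 ≤ (∑ i, ‖A i x‖) ^ 2 := by gcongr; exact norm_sum_le _ _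
      _ ≤ ∑ i, r i * ‖A i x‖ ^ 2 :=
        Finset.sq_sum_le_sum_mul_sq _ _ (fun i _ ↦ hr i) hsum
end

section
/- Let A₁,…,Aₙ, B₁,…,Bₙ be bounded operators on a complex Hilbert space and α : Fin n × Fin n → ℂ with conj(α(i,j))·α(j,i) = 1 for all i,j. Then |∑ᵢ (Aᵢ − Bᵢ)|² ≤ ∑_{i,j} |α(i,j)Aᵢ − α(j,i)Bⱼ|² in the Loewner order. -/
/-!
Expanding `|α(i,j) Xᵢ - α(j,i) Yⱼ|²` with `conj α(i,j) · α(j,i) = 1` makes its cross terms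
`-(Xᵢ* Yⱼ + Yⱼ* Xᵢ)` scalar-free, so they cancel against those of `|∑ (Xᵢ - Yᵢ)|²`, and the
difference of the two sides splits as `δ(X) + δ(Y)` with
`δ(X) = ∑ᵢⱼ |α(i,j)|² |Xᵢ|² - |∑ Xᵢ|²`. Taking `Y = X` shows that `2 δ(X)` is the sum of
squares `∑ᵢⱼ |α(i,j) Xᵢ - α(j,i) Xⱼ|²`, so `δ(X) ≥ 0`.
-/

open ContinuousLinearMap

section StarAlgebra

variable {K R ι : Type*} [CommRing K] [StarRing K] [Ring R] [StarRing R] [Algebra K R]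
  [StarModule K R] [Fintype ι]

theorem star_smul_sub_smul_mul_smul_sub_smul {a b : K} (hab : star a * b = 1) (x y : R) :
    star (a • x - b • y) * (a • x - b • y)
      = (star a * a) • (star x * x) + (star b * b) • (star y * y) - (star x * y + star y * x) := by
  have hba : star b * a = 1 := by simpa [mul_comm] using congrArg star hab
  simp only [star_sub, star_smul, sub_mul, mul_sub, smul_mul_assoc, mul_smul_comm, smul_sub,
    smul_smul]
  match_scalars
  · ring
  · linear_combination -hba
  · linear_combination -hab
  · ring

def bohrSum (α : ι × ι → K) (X Y : ι → R) : R :=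
  ∑ i, ∑ j, star (α (i, j) • X i - α (j, i) • Y j) * (α (i, j) • X i - α (j, i) • Y j)

def bohrDefect (α : ι × ι → K) (X : ι → R) : R :=
  ∑ i, ∑ j, (star (α (i, j)) * α (i, j)) • (star (X i) * X i) - star (∑ i, X i) * ∑ i, X i

variable {α : ι × ι → K}

theorem bohrSum_sub_star_sum_mul_sum (hα : ∀ i j, star (α (i, j)) * α (j, i) = 1)
    (X Y : ι → R) :
    bohrSum α X Y - star (∑ i, (X i - Y i)) * ∑ i, (X i - Y i)
      = bohrDefect α X + bohrDefect α Y := by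
  have expand i j := star_smul_sub_smul_mul_smul_sub_smul (hα i j) (X i) (Y j)
  simp only [bohrSum, expand]
  simp only [bohrDefect, Finset.sum_add_distrib, Finset.sum_sub_distrib, star_sum,
    star_sub, sub_mul, mul_sub, Finset.sum_mul_sum]
  rw [Finset.sum_comm (f := fun i j => (star (α (j, i)) * α (j, i)) • (star (Y j) * Y j)),
    Finset.sum_comm (f := fun i j => star (Y j) * X i)]
  abel

theorem bohrSum_self (hα : ∀ i j, star (α (i, j)) * α (j, i) = 1) (X : ι → R) :
    bohrSum α X X = bohrDefect α X + bohrDefect α X := by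
  simpa using bohrSum_sub_star_sum_mul_sum hα X X

end StarAlgebra

open scoped ComplexOrder in
theorem isPositive_bohrDefect {𝕜 E ι : Type*} [RCLike 𝕜] [NormedAddCommGroup E]
    [InnerProductSpace 𝕜 E] [CompleteSpace E] [Fintype ι] {α : ι × ι → 𝕜}
    (hα : ∀ i j, star (α (i, j)) * α (j, i) = 1) (X : ι → E →L[𝕜] E) :
    (bohrDefect α X).IsPositive := by
  have hdouble : (bohrDefect α X + bohrDefect α X).IsPositive := by
    rw [← bohrSum_self hα]
    exact isPositive_sum _ fun i _ ↦ isPositive_sum _ fun j _ ↦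
      isPositive_adjoint_comp_self (α (i, j) • X i - α (j, i) • X j)
  simpa [← two_smul 𝕜, smul_smul] using hdouble.smul_of_nonneg (c := (2⁻¹ : 𝕜)) (by positivity)

theorem generalized_operator_bohr_inequality
    {E : Type*} [NormedAddCommGroup E] [InnerProductSpace ℂ E] [CompleteSpace E]
    {n : ℕ} (A B : Fin n → (E →L[ℂ] E)) (α : Fin n × Fin n → ℂ)
    (hα : ∀ i j, (starRingEnd ℂ) (α (i, j)) * α (j, i) = 1) :
    ((∑ i, ∑ j, adjoint (α (i, j) • A i - α (j, i) • B j) * (α (i, j) • A i - α (j, i) • B j))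
      - adjoint (∑ i, (A i - B i)) * (∑ i, (A i - B i))).IsPositive := by
  have key := bohrSum_sub_star_sum_mul_sum hα A B
  simp only [bohrSum, star_eq_adjoint] at key
  rw [key]
  exact (isPositive_bohrDefect hα A).add (isPositive_bohrDefect hα B)
end

section
/- Let x₁,…,xₙ, y₁,…,yₙ be vectors in an inner product space. Then ∑_{i,j=1}^n ‖xᵢ−xⱼ‖² + ∑_{i,j=1}^n ‖yᵢ−yⱼ‖² = 2∑_{i,j=1}^n ‖xᵢ−yⱼ‖² − 2‖∑_{i=1}^n (xᵢ−yᵢ)‖². -/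
open Finset RCLike

/-! Expanding `‖a - b‖² = ‖a‖² - 2 re ⟪a, b⟫ + ‖b‖²` turns each double sum of squared distances into
sums of squared norms and the single cross term `re ⟪∑ aᵢ, ∑ bⱼ⟫`; the norms cancel in the identity, and
the three cross terms combine into `‖∑ xᵢ - ∑ yᵢ‖²` by the same expansion. -/

theorem sum_sum_norm_sub_sq {𝕜 E ι : Type*} [RCLike 𝕜] [NormedAddCommGroup E]
    [InnerProductSpace 𝕜 E] [Fintype ι] (u v : ι → E) :
    ∑ i, ∑ j, ‖u i - v j‖ ^ 2
      = Fintype.card ι * (∑ i, ‖u i‖ ^ 2) + Fintype.card ι * (∑ j, ‖v j‖ ^ 2)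
        - 2 * re (inner 𝕜 (∑ i, u i) (∑ j, v j)) := by
  simp_rw [norm_sub_sq (𝕜 := 𝕜), sum_add_distrib, sum_sub_distrib, sum_const, card_univ,
    nsmul_eq_mul, ← mul_sum, sum_inner, inner_sum, map_sum, mul_sum]
  ring

theorem vector_parallelogram_identity
    {𝕜 E : Type*} [RCLike 𝕜] [NormedAddCommGroup E] [InnerProductSpace 𝕜 E]
    {n : ℕ} (x y : Fin n → E) :
    (∑ i, ∑ j, ‖x i - x j‖ ^ 2) + (∑ i, ∑ j, ‖y i - y j‖ ^ 2)
      = 2 * (∑ i, ∑ j, ‖x i - y j‖ ^ 2) - 2 * ‖∑ i, (x i - y i)‖ ^ 2 := by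
  rw [sum_sum_norm_sub_sq (𝕜 := 𝕜) x x, sum_sum_norm_sub_sq (𝕜 := 𝕜) y y,
    sum_sum_norm_sub_sq (𝕜 := 𝕜) x y, sum_sub_distrib, norm_sub_sq (𝕜 := 𝕜),
    inner_self_eq_norm_sq, inner_self_eq_norm_sq]
  ring
end

section
/- Let x₁,…,xₙ, y₁,…,yₙ be vectors in an inner product space and r₁,…,rₙ positive reals. Then ∑_{i<j} ‖√(rᵢ/rⱼ)xᵢ − √(rⱼ/rᵢ)xⱼ‖² + ∑_{i<j} ‖√(rᵢ/rⱼ)yᵢ − √(rⱼ/rᵢ)yⱼ‖² = ∑_{i,j=1}^n ‖√(rᵢ/rⱼ)xᵢ − √(rⱼ/rᵢ)yⱼ‖² − ‖∑_{i=1}^n (xᵢ−yᵢ)‖². -/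
/-!
The weights `a i j = √(rᵢ/rⱼ)` satisfy `a i j * a j i = 1`, so
`‖a i j • u - a j i • v‖² = a i j² ‖u‖² + a j i² ‖v‖² - 2⟪u, v⟫` carries no weight on `⟪u, v⟫`.
Summed over all pairs, the inner products assemble into `⟪∑ x, ∑ y⟫`. The summand with
`y = x` is symmetric in `(i, j)` and vanishes on the diagonal, so each sum over `i < j` is half
of a full double sum; the identity then reduces to `‖X - Y‖² = ‖X‖² - 2⟪X, Y⟫ + ‖Y‖²`.
-/

open Finset RealInnerProductSpace

theorem Finset.two_nsmul_sum_sum_filter_lt {ι M : Type*} [Fintype ι] [LinearOrder ι]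
    [AddCommMonoid M] (f : ι → ι → M) (hsymm : ∀ i j, f i j = f j i)
    (hdiag : ∀ i, f i i = 0) :
    2 • ∑ i, ∑ j with i < j, f i j = ∑ i, ∑ j, f i j := by
  have hsplit : ∀ i, ∑ j, f i j = ∑ j with i < j, f i j + ∑ j with j < i, f i j := by
    intro i
    rw [sum_filter, sum_filter, ← sum_add_distrib]
    refine sum_congr rfl fun j _ => ?_
    rcases lt_trichotomy i j with h | rfl | h
    · simp [h, h.not_gt]
    · simp [hdiag]
    · simp [h, h.not_gt]
  have hswap : ∑ i, ∑ j with j < i, f i j = ∑ i, ∑ j with i < j, f i j := by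
    simp only [sum_filter]
    rw [sum_comm]
    exact sum_congr rfl fun i _ => sum_congr rfl fun j _ => by rw [hsymm]
  rw [two_nsmul, sum_congr rfl fun i _ => hsplit i, sum_add_distrib, hswap]

section InnerProductSpace

variable {E : Type*} [NormedAddCommGroup E] [InnerProductSpace ℝ E]

theorem norm_smul_sub_smul_sq_of_mul_eq_one {a b : ℝ} (hab : a * b = 1) (u v : E) :
    ‖a • u - b • v‖ ^ 2 = a ^ 2 * ‖u‖ ^ 2 + b ^ 2 * ‖v‖ ^ 2 - 2 * ⟪u, v⟫ := by
  rw [norm_sub_sq_real, norm_smul, norm_smul, real_inner_smul_left, real_inner_smul_right,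
    mul_pow, mul_pow, Real.norm_eq_abs, Real.norm_eq_abs, sq_abs, sq_abs]
  linear_combination (-2 * ⟪u, v⟫) * hab

variable {ι : Type*} [Fintype ι] (a : ι → ι → ℝ) (ha : ∀ i j, a i j * a j i = 1)
include ha

theorem sum_sum_norm_smul_sub_smul_sq (x y : ι → E) :
    ∑ i, ∑ j, ‖a i j • x i - a j i • y j‖ ^ 2
      = ∑ i, ∑ j, a i j ^ 2 * ‖x i‖ ^ 2 + ∑ i, ∑ j, a j i ^ 2 * ‖y j‖ ^ 2
        - 2 * ⟪∑ i, x i, ∑ j, y j⟫ := by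
  simp_rw [norm_smul_sub_smul_sq_of_mul_eq_one (ha _ _), sum_inner, inner_sum, mul_sum,
    sum_sub_distrib, sum_add_distrib]

theorem sum_sum_filter_lt_norm_smul_sub_smul_sq [LinearOrder ι] (x : ι → E) :
    ∑ i, ∑ j with i < j, ‖a i j • x i - a j i • x j‖ ^ 2
      = ∑ i, ∑ j, a i j ^ 2 * ‖x i‖ ^ 2 - ‖∑ i, x i‖ ^ 2 := by
  have hhalf := two_nsmul_sum_sum_filter_lt (fun i j => ‖a i j • x i - a j i • x j‖ ^ 2)
    (fun i j => by rw [norm_sub_rev]) (fun i => by simp)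
  have hfull := sum_sum_norm_smul_sub_smul_sq a ha x x
  rw [sum_comm (f := fun i j => a j i ^ 2 * ‖x j‖ ^ 2), real_inner_self_eq_norm_sq] at hfull
  rw [two_nsmul] at hhalf
  linarith

theorem sum_sum_filter_lt_norm_smul_sub_smul_sq_add [LinearOrder ι] (x y : ι → E) :
    ∑ i, ∑ j with i < j, ‖a i j • x i - a j i • x j‖ ^ 2
        + ∑ i, ∑ j with i < j, ‖a i j • y i - a j i • y j‖ ^ 2
      = ∑ i, ∑ j, ‖a i j • x i - a j i • y j‖ ^ 2 - ‖∑ i, (x i - y i)‖ ^ 2 := by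
  rw [sum_sum_filter_lt_norm_smul_sub_smul_sq a ha, sum_sum_filter_lt_norm_smul_sub_smul_sq a ha,
    sum_sum_norm_smul_sub_smul_sq a ha, sum_comm (f := fun i j => a j i ^ 2 * ‖y j‖ ^ 2),
    sum_sub_distrib, norm_sub_sq_real]
  ring

end InnerProductSpace

theorem vector_weighted_parallelogram_identity
    {E : Type*} [NormedAddCommGroup E] [InnerProductSpace ℂ E]
    {n : ℕ} (x y : Fin n → E) (r : Fin n → ℝ) (hr : ∀ i, 0 < r i) :
    (∑ i, ∑ j ∈ Finset.univ.filter (fun j => i < j),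
        ‖Real.sqrt (r i / r j) • x i - Real.sqrt (r j / r i) • x j‖ ^ 2)
      + (∑ i, ∑ j ∈ Finset.univ.filter (fun j => i < j),
          ‖Real.sqrt (r i / r j) • y i - Real.sqrt (r j / r i) • y j‖ ^ 2)
      = (∑ i, ∑ j, ‖Real.sqrt (r i / r j) • x i - Real.sqrt (r j / r i) • y j‖ ^ 2)
        - ‖∑ i, (x i - y i)‖ ^ 2 := by
  let _ : InnerProductSpace ℝ E := .rclikeToReal ℂ E
  refine sum_sum_filter_lt_norm_smul_sub_smul_sq_add (fun i j => √(r i / r j)) (fun i j => ?_) x y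
  have hi := (hr i).ne'
  have hj := (hr j).ne'
  rw [← Real.sqrt_mul (div_nonneg (hr i).le (hr j).le), Real.sqrt_eq_one]
  field_simp
end

section
/- Let A₁,…,Aₙ be positive semidefinite matrices over ℂ and f : [0,∞) → [0,∞) a convex function with f(0) = 0. Then tr(f(∑ⱼ Aⱼ)) ≥ tr(∑ⱼ f(Aⱼ)), where f acts via functional calculus. -/
/-!
Both traces are sums of `f` over eigenvalues, so it suffices to compare the eigenvalues of all the
`A j` taken together with those of `S = ∑ j, A j`. They satisfy the hinge inequalities
`∑ j, ∑ i, (λᵢ(A j) - t)⁺ ≤ ∑ i, (λᵢ(S) - t)⁺` for `t ≥ 0`, a Ky Fan-type bound: test `S` on an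
orthonormal basis of the span `V` of the eigenvectors of the `A j` with eigenvalues above `t`;
each `A j` has trace on `V` at least the sum of those eigenvalues, and `dim V` is at most their
number. On the other hand, on a finite subset of `[0, ∞)` a convex `f ≥ 0` with `f 0 = 0` agrees
with a nonnegative combination of hinge functions `x ↦ (x - t)⁺`, `t ≥ 0`, and the hinge
inequalities are preserved by such combinations.
-/

open Finset
open scoped InnerProductSpace ComplexOrder

def hingeSum {N : ℕ} (β t : Fin N → ℝ) (x : ℝ) : ℝ := ∑ k, β k * max (x - t k) 0

lemma hingeSum_cons {N : ℕ} (b q : ℝ) (β t : Fin N → ℝ) (x : ℝ) :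
    hingeSum (Fin.cons b β) (Fin.cons q t) x = b * max (x - q) 0 + hingeSum β t x := by
  simp [hingeSum, Fin.sum_univ_succ]

lemma hingeSum_eq_add_mul_of_le {N : ℕ} {β t : Fin N → ℝ} {y z : ℝ} (ht : ∀ k, t k ≤ y)
    (hyz : y ≤ z) : hingeSum β t z = hingeSum β t y + (∑ k, β k) * (z - y) := by
  simp only [hingeSum, sum_mul, ← sum_add_distrib]
  refine sum_congr rfl fun k _ => ?_
  rw [max_eq_left (by linarith [ht k]), max_eq_left (by linarith [ht k])]
  ring

lemma sum_hingeSum {ι : Type*} [Fintype ι] {N : ℕ} (β t : Fin N → ℝ) (a : ι → ℝ) :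
    ∑ i, hingeSum β t (a i) = ∑ k, β k * ∑ i, max (a i - t k) 0 := by
  simp only [hingeSum, mul_sum]
  exact sum_comm

lemma Finset.sum_max_sub_zero_eq_sum_filter {ι : Type*} (s : Finset ι) (b : ι → ℝ) (t : ℝ) :
    ∑ i ∈ s, max (b i - t) 0 = ∑ i ∈ s with t < b i, (b i - t) := by
  rw [sum_filter]
  refine sum_congr rfl fun i _ => ?_
  split_ifs with h
  · exact max_eq_left (by linarith)
  · exact max_eq_right (by linarith)

lemma ConvexOn.add_slope_mul_le {s : Set ℝ} {f : ℝ → ℝ} (hf : ConvexOn ℝ s f) {x y z : ℝ}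
    (hx : x ∈ s) (hz : z ∈ s) (hxy : x < y) (hyz : y ≤ z) :
    f y + (f y - f x) / (y - x) * (z - y) ≤ f z := by
  rcases hyz.eq_or_lt with rfl | hyz
  · simp
  have := hf.slope_mono_adjacent hx hz hxy hyz
  rw [le_div_iff₀ (sub_pos.2 hyz)] at this
  linarith

/-- The last conjunct is the induction invariant: it makes the weight of each new hinge, placed at
the previous largest node, nonnegative. -/
lemma ConvexOn.exists_hingeSum_eq {f : ℝ → ℝ} (hf : ConvexOn ℝ (Set.Ici 0) f)
    (hf_nonneg : ∀ x ∈ Set.Ici (0 : ℝ), 0 ≤ f x) (hf_zero : f 0 = 0) (P : Finset ℝ)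
    (hP : ∀ p ∈ P, 0 ≤ p) :
    ∃ (N : ℕ) (β t : Fin N → ℝ), (∀ k, 0 ≤ β k) ∧ (∀ k, t k ∈ insert 0 P) ∧
      (∀ x ∈ insert 0 P, hingeSum β t x = f x) ∧
      ∀ z, (∀ p ∈ insert 0 P, p ≤ z) → hingeSum β t z ≤ f z := by
  induction P using Finset.induction_on_max with
  | empty =>
    refine ⟨0, Fin.elim0, Fin.elim0, Fin.rec0, Fin.rec0, ?_, fun z hz => ?_⟩
    · simp [hingeSum, hf_zero]
    · simpa [hingeSum] using hf_nonneg z (hz 0 (mem_insert_self 0 ∅))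
  | insert y P hlt ih =>
    obtain ⟨N, β, t, hβ, ht, heq, hle⟩ := ih fun p hp => hP p (mem_insert_of_mem hp)
    have hPy : insert 0 (insert y P) = insert y (insert 0 P) := insert_comm 0 y P
    set q := (insert 0 P).max' (insert_nonempty 0 P)
    have hq : q ∈ insert 0 P := max'_mem _ _
    have hleq : ∀ x ∈ insert 0 P, x ≤ q := fun x hx => le_max' _ x hx
    rcases le_or_gt y q with hyq | hyq
    · have hy : y ∈ insert 0 P := by
        rcases mem_insert.1 hq with h | h
        · exact mem_insert.2 (Or.inl (le_antisymm (h ▸ hyq) (hP y (mem_insert_self y P))))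
        · exact absurd hyq (not_le.2 (hlt q h))
      rw [hPy, Finset.insert_eq_of_mem hy]
      exact ⟨N, β, t, hβ, ht, heq, hle⟩
    set b := (f y - hingeSum β t y) / (y - q)
    have hb : 0 ≤ b := div_nonneg (sub_nonneg.2 (hle y fun p hp => (hleq p hp).trans hyq.le))
      (sub_nonneg.2 hyq.le)
    have hnodes : ∀ k, (Fin.cons q t : Fin (N + 1) → ℝ) k ≤ q :=
      Fin.cases le_rfl fun k => hleq _ (ht k)
    have hagree : ∀ x ∈ insert 0 (insert y P),
        hingeSum (Fin.cons b β) (Fin.cons q t) x = f x := by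
      intro x hx
      rw [hingeSum_cons]
      rcases mem_insert.1 (hPy ▸ hx) with rfl | hx
      · rw [max_eq_left (sub_nonneg.2 hyq.le), div_mul_cancel₀ _ (sub_pos.2 hyq).ne']
        ring
      · rw [max_eq_right (sub_nonpos.2 (hleq x hx)), mul_zero, zero_add, heq x hx]
    refine ⟨N + 1, Fin.cons b β, Fin.cons q t, Fin.cases hb hβ, ?_, hagree, fun z hz => ?_⟩
    · rw [hPy]
      exact Fin.cases (mem_insert_of_mem hq) fun k => mem_insert_of_mem (ht k)
    have hyz : y ≤ z := hz y (hPy ▸ mem_insert_self y _)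
    have hslope := hingeSum_eq_add_mul_of_le (β := Fin.cons b β) hnodes hyq.le
    rw [hagree y (hPy ▸ mem_insert_self y _), hagree q (hPy ▸ mem_insert_of_mem hq)] at hslope
    have hσ : ∑ k, (Fin.cons b β : Fin (N + 1) → ℝ) k = (f y - f q) / (y - q) := by
      rw [eq_div_iff (sub_pos.2 hyq).ne']
      linarith
    have hP0 : ∀ p ∈ insert 0 P, p ∈ Set.Ici (0 : ℝ) := by
      intro p hp
      rcases mem_insert.1 hp with rfl | hp
      exacts [Set.self_mem_Ici, hP p (mem_insert_of_mem hp)]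
    rw [hingeSum_eq_add_mul_of_le (fun k => (hnodes k).trans hyq.le) hyz,
      hagree y (hPy ▸ mem_insert_self y _), hσ]
    exact hf.add_slope_mul_le (hP0 q hq) (hz 0 (mem_insert_self 0 _)) hyq hyz

theorem sum_le_sum_of_sum_max_sub_le {ι κ : Type*} [Fintype ι] [Fintype κ] {f : ℝ → ℝ}
    (hf : ConvexOn ℝ (Set.Ici 0) f) (hf_nonneg : ∀ x ∈ Set.Ici (0 : ℝ), 0 ≤ f x)
    (hf_zero : f 0 = 0)
    {a : ι → ℝ} {c : κ → ℝ} (ha : ∀ i, 0 ≤ a i) (hc : ∀ k, 0 ≤ c k)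
    (h : ∀ t, 0 ≤ t → ∑ i, max (a i - t) 0 ≤ ∑ k, max (c k - t) 0) :
    ∑ i, f (a i) ≤ ∑ k, f (c k) := by
  set P := univ.image a ∪ univ.image c
  have hP : ∀ p ∈ P, 0 ≤ p := by
    simp only [P, mem_union, mem_image, mem_univ, true_and]
    rintro p (⟨i, rfl⟩ | ⟨k, rfl⟩)
    exacts [ha i, hc k]
  obtain ⟨N, β, t, hβ, ht, heq, -⟩ := hf.exists_hingeSum_eq hf_nonneg hf_zero P hP
  have ht0 (n : Fin N) : 0 ≤ t n := by
    rcases mem_insert.1 (ht n) with h | h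
    exacts [h.ge, hP _ h]
  have hfa (i : ι) : f (a i) = hingeSum β t (a i) := (heq _ (by simp [P])).symm
  have hfc (k : κ) : f (c k) = hingeSum β t (c k) := (heq _ (by simp [P])).symm
  simp only [hfa, hfc, sum_hingeSum]
  gcongr with n
  exacts [hβ n, h _ (ht0 n)]

namespace Matrix.IsHermitian

variable {𝕜 n : Type*} [RCLike 𝕜] [Fintype n] [DecidableEq n] {M : Matrix n n 𝕜}

lemma re_trace_cfc (hM : M.IsHermitian) (f : ℝ → ℝ) :
    RCLike.re (cfc f M).trace = ∑ i, f (hM.eigenvalues i) := by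
  rw [hM.cfc_eq, IsHermitian.cfc, Unitary.conjStarAlgAut_apply, trace_mul_cycle,
    Unitary.coe_star_mul_self, one_mul, trace_diagonal, map_sum]
  simp

lemma toEuclideanLin_eigenvectorBasis (hM : M.IsHermitian) (i : n) :
    toEuclideanLin M (hM.eigenvectorBasis i) = (hM.eigenvalues i : 𝕜) • hM.eigenvectorBasis i := by
  rw [toLpLin_apply, hM.mulVec_eigenvectorBasis i, RCLike.real_smul_eq_coe_smul (K := 𝕜)]
  rfl

lemma re_inner_toEuclideanLin_self (hM : M.IsHermitian) (x : EuclideanSpace 𝕜 n) :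
    RCLike.re ⟪x, toEuclideanLin M x⟫_𝕜 =
      ∑ i, hM.eigenvalues i * ‖⟪hM.eigenvectorBasis i, x⟫_𝕜‖ ^ 2 := by
  rw [← hM.eigenvectorBasis.sum_inner_mul_inner x, map_sum]
  refine sum_congr rfl fun i _ => ?_
  rw [← isSymmetric_toEuclideanLin_iff.mpr hM, toEuclideanLin_eigenvectorBasis, inner_smul_left,
    RCLike.conj_ofReal, ← inner_conj_symm x, mul_comm, mul_assoc, RCLike.mul_conj]
  norm_cast

lemma sum_re_inner_sub_le_sum_max_eigenvalues_sub (hM : M.IsHermitian) {κ : Type*} [Fintype κ]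
    {w : κ → EuclideanSpace 𝕜 n} (hw : Orthonormal 𝕜 w) (t : ℝ) :
    ∑ k, (RCLike.re ⟪w k, toEuclideanLin M (w k)⟫_𝕜 - t) ≤
      ∑ i, max (hM.eigenvalues i - t) 0 := by
  have hcoord (k : κ) : ∑ i, ‖⟪hM.eigenvectorBasis i, w k⟫_𝕜‖ ^ 2 = 1 := by
    rw [hM.eigenvectorBasis.sum_sq_norm_inner_right, hw.1 k, one_pow]
  have hbessel (i : n) : ∑ k, ‖⟪hM.eigenvectorBasis i, w k⟫_𝕜‖ ^ 2 ≤ 1 := by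
    simp_rw [norm_inner_symm (hM.eigenvectorBasis i)]
    simpa [hM.eigenvectorBasis.orthonormal.1 i] using
      hw.sum_inner_products_le (hM.eigenvectorBasis i)
  have hexpand (k : κ) : RCLike.re ⟪w k, toEuclideanLin M (w k)⟫_𝕜 - t =
      ∑ i, (hM.eigenvalues i - t) * ‖⟪hM.eigenvectorBasis i, w k⟫_𝕜‖ ^ 2 := by
    simp only [re_inner_toEuclideanLin_self hM, sub_mul, sum_sub_distrib, ← mul_sum,
      hcoord k, mul_one]
  calc ∑ k, (RCLike.re ⟪w k, toEuclideanLin M (w k)⟫_𝕜 - t)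
      = ∑ i, (hM.eigenvalues i - t) * ∑ k, ‖⟪hM.eigenvectorBasis i, w k⟫_𝕜‖ ^ 2 := by
        simp only [hexpand, mul_sum]
        exact sum_comm
    _ ≤ ∑ i, max (hM.eigenvalues i - t) 0 := by
        gcongr with i
        calc (hM.eigenvalues i - t) * ∑ k, ‖⟪hM.eigenvectorBasis i, w k⟫_𝕜‖ ^ 2
            ≤ max (hM.eigenvalues i - t) 0 * ∑ k, ‖⟪hM.eigenvectorBasis i, w k⟫_𝕜‖ ^ 2 := by
              gcongr
              exact le_max_left _ _
          _ ≤ max (hM.eigenvalues i - t) 0 :=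
              mul_le_of_le_one_right (le_max_right _ _) (hbessel i)

end Matrix.IsHermitian

namespace Matrix.PosSemidef

variable {𝕜 n : Type*} [RCLike 𝕜] [Fintype n] [DecidableEq n] {M : Matrix n n 𝕜}

lemma sum_eigenvalues_le_sum_re_inner (hM : M.PosSemidef)
    {V : Submodule 𝕜 (EuclideanSpace 𝕜 n)} {κ : Type*} [Fintype κ] (w : OrthonormalBasis κ 𝕜 V)
    {s : Finset n} (hs : ∀ i ∈ s, hM.isHermitian.eigenvectorBasis i ∈ V) :
    ∑ i ∈ s, hM.isHermitian.eigenvalues i ≤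
      ∑ k, RCLike.re ⟪(w k : EuclideanSpace 𝕜 n), toEuclideanLin M (w k)⟫_𝕜 := by
  set u := hM.isHermitian.eigenvectorBasis with hu
  set μ := hM.isHermitian.eigenvalues with hμ
  have hcoord (i : n) (hi : i ∈ s) : ∑ k, ‖⟪u i, w k⟫_𝕜‖ ^ 2 = 1 := by
    have := w.sum_sq_norm_inner_left ⟨u i, hs i hi⟩
    simp only [Submodule.coe_inner] at this
    rw [this]
    change ‖u i‖ ^ 2 = 1
    rw [u.orthonormal.1 i, one_pow]
  calc ∑ i ∈ s, μ i
      = ∑ i ∈ s, μ i * ∑ k, ‖⟪u i, w k⟫_𝕜‖ ^ 2 :=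
        sum_congr rfl fun i hi => by rw [hcoord i hi, mul_one]
    _ ≤ ∑ i, μ i * ∑ k, ‖⟪u i, w k⟫_𝕜‖ ^ 2 :=
        sum_le_sum_of_subset_of_nonneg (subset_univ s) fun i _ _ =>
          mul_nonneg (hM.eigenvalues_nonneg i) (by positivity)
    _ = _ := by
        simp_rw [hM.isHermitian.re_inner_toEuclideanLin_self, ← hu, ← hμ, mul_sum]
        exact sum_comm

end Matrix.PosSemidef

namespace Matrix

variable {𝕜 n : Type*} [RCLike 𝕜] [Fintype n] [DecidableEq n]

theorem sum_sum_max_eigenvalues_sub_le {ι : Type*} [Fintype ι] {A : ι → Matrix n n 𝕜}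
    (hA : ∀ j, (A j).PosSemidef) (hS : (∑ j, A j).IsHermitian) {t : ℝ} (ht : 0 ≤ t) :
    ∑ j, ∑ i, max ((hA j).isHermitian.eigenvalues i - t) 0 ≤
      ∑ i, max (hS.eigenvalues i - t) 0 := by
  let s (j : ι) : Finset n := {i | t < (hA j).isHermitian.eigenvalues i}
  let v (p : Σ j, s j) : EuclideanSpace 𝕜 n := (hA p.1).isHermitian.eigenvectorBasis p.2
  let V := Submodule.span 𝕜 (Set.range v)
  let w := stdOrthonormalBasis 𝕜 V
  have hw : Orthonormal 𝕜 fun k => (w k : EuclideanSpace 𝕜 n) :=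
    w.orthonormal.comp_linearIsometry V.subtypeₗᵢ
  have hdim : (Module.finrank 𝕜 V : ℝ) ≤ ∑ j, (#(s j) : ℝ) := by
    exact_mod_cast (finrank_range_le_card v).trans_eq
      (by simp only [Fintype.card_sigma, Fintype.card_coe])
  have hcompress (j : ι) : ∑ i ∈ s j, (hA j).isHermitian.eigenvalues i ≤
      ∑ k, RCLike.re ⟪(w k : EuclideanSpace 𝕜 n), toEuclideanLin (A j) (w k)⟫_𝕜 :=
    (hA j).sum_eigenvalues_le_sum_re_inner w fun i hi => Submodule.subset_span ⟨⟨j, i, hi⟩, rfl⟩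
  calc ∑ j, ∑ i, max ((hA j).isHermitian.eigenvalues i - t) 0
      = ∑ j, ∑ i ∈ s j, (hA j).isHermitian.eigenvalues i - (∑ j, (#(s j) : ℝ)) * t := by
        simp [sum_max_sub_zero_eq_sum_filter, s, sum_sub_distrib, sum_mul]
    _ ≤ ∑ j, ∑ k, RCLike.re ⟪(w k : EuclideanSpace 𝕜 n), toEuclideanLin (A j) (w k)⟫_𝕜
          - Module.finrank 𝕜 V * t := by
        gcongr with j
        exact hcompress j
    _ = ∑ k, (RCLike.re ⟪(w k : EuclideanSpace 𝕜 n), toEuclideanLin (∑ j, A j) (w k)⟫_𝕜 - t) := by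
        simp [map_sum, inner_sum, sum_sub_distrib, sum_comm (γ := ι)]
    _ ≤ ∑ i, max (hS.eigenvalues i - t) 0 := hS.sum_re_inner_sub_le_sum_max_eigenvalues_sub hw t

end Matrix

/-- Kosem's trace inequality: for PSD matrices and a nonnegative convex `f` with `f 0 = 0`,
`tr (f (∑ Aⱼ)) ≥ tr (∑ f (Aⱼ))`, with `f` applied via the continuous functional calculus. -/
theorem trace_kosem_inequality
    {d : Type*} [Fintype d] [DecidableEq d] {m : ℕ}
    (A : Fin m → Matrix d d ℂ) (hA : ∀ j, (A j).PosSemidef)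
    (f : ℝ → ℝ) (hf : ConvexOn ℝ (Set.Ici 0) f)
    (hf0 : ∀ x ∈ Set.Ici (0:ℝ), 0 ≤ f x) (hf00 : f 0 = 0) :
    ((cfc f (∑ j, A j)).trace).re ≥ ((∑ j, cfc f (A j)).trace).re := by
  have hS : (∑ j, A j).PosSemidef := Matrix.posSemidef_sum univ fun j _ => hA j
  have hre (M : Matrix d d ℂ) (hM : M.IsHermitian) :
      (cfc f M).trace.re = ∑ i, f (hM.eigenvalues i) := hM.re_trace_cfc f
  rw [ge_iff_le, Matrix.trace_sum, Complex.re_sum, hre _ hS.isHermitian]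
  simp only [fun j => hre _ (hA j).isHermitian]
  rw [← Fintype.sum_sigma']
  refine sum_le_sum_of_sum_max_sub_le hf hf0 hf00 (fun p => (hA p.1).eigenvalues_nonneg p.2)
    hS.eigenvalues_nonneg fun t ht => ?_
  exact (Fintype.sum_sigma _).trans_le (Matrix.sum_sum_max_eigenvalues_sub_le hA hS.isHermitian ht)
end

section
/- Let A, B be n×n complex matrices and p ≥ 2. Then ‖A+B‖ₚᵖ + ‖A−B‖ₚᵖ ≤ 2^{p−1}(‖A‖ₚᵖ + ‖B‖ₚᵖ). -/
/-!
Write `f x = x ^ (p / 2)`, so that `‖X‖ₚᵖ = tr f(XᴴX) = tr f(XXᴴ)`. For `C = A + B`, `D = A - B`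
stack `Z = [Cᴴ; Dᴴ]`: then `ZZᴴ` has diagonal blocks `CᴴC`, `DᴴD`, while
`ZᴴZ = CCᴴ + DDᴴ = ½ (4AAᴴ) + ½ (4BBᴴ)`. Pinching gives
`tr f(CᴴC) + tr f(DᴴD) ≤ tr f(ZZᴴ) = tr f(ZᴴZ)`, and convexity of `P ↦ tr f(P)` on positive
semidefinite matrices together with `tr f(4P) = 2ᵖ tr f(P)` gives the bound `2ᵖ⁻¹ (‖A‖ₚᵖ + ‖B‖ₚᵖ)`.
Both trace inequalities come from Jensen's inequality: the diagonal of `VᴴGV`, `V` unitary, is a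
doubly stochastic average of the eigenvalues of `G`.
-/

/-- `schattenPowNorm p X = ‖X‖ₚᵖ = tr ((XᴴX)^(p/2))`, the `p`-th power of the Schatten
`p`-norm of a complex matrix, via the continuous functional calculus. -/
noncomputable def schattenPowNorm {d : Type*} [Fintype d] [DecidableEq d]
    (p : ℝ) (X : Matrix d d ℂ) : ℝ :=
  ((cfc (fun x : ℝ => x ^ (p / 2)) (X.conjTranspose * X)).trace).re

open Matrix Polynomial
open scoped ComplexOrder

namespace Matrix

variable {𝕜 : Type*} [RCLike 𝕜] {m n : Type*}

lemma star_fromBlocks_zero_zero (U : Matrix m m 𝕜) (V : Matrix n n 𝕜) :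
    star (fromBlocks U 0 0 V) = fromBlocks (star U) 0 0 (star V) := by
  simp [star_eq_conjTranspose, fromBlocks_conjTranspose]

lemma PosSemidef.re_diag_nonneg {P : Matrix n n 𝕜} (hP : P.PosSemidef) (i : n) :
    0 ≤ RCLike.re (P i i) :=
  (RCLike.nonneg_iff.mp hP.diag_nonneg).1

lemma convex_setOf_posSemidef : Convex ℝ {P : Matrix n n 𝕜 | P.PosSemidef} :=
  fun _ hP _ hQ _ _ ha hb _ => (hP.smul ha).add (hQ.smul hb)

variable [Fintype m] [DecidableEq m] [Fintype n] [DecidableEq n]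

lemma IsHermitian.trace_cfc {A : Matrix n n 𝕜} (hA : A.IsHermitian) (f : ℝ → ℝ) :
    (cfc f A).trace = ∑ i, (f (hA.eigenvalues i) : 𝕜) := by
  rw [hA.cfc_eq, IsHermitian.cfc, Unitary.conjStarAlgAut_apply, trace_mul_cycle,
    Unitary.coe_star_mul_self, one_mul, trace_diagonal]
  rfl

lemma trace_cfc_self_mul_conjTranspose_eq (X : Matrix m n 𝕜) {f : ℝ → ℝ} (hf : f 0 = 0) :
    (cfc f (X * Xᴴ)).trace = (cfc f (Xᴴ * X)).trace := by
  have hXX := isHermitian_mul_conjTranspose_self X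
  have hXX' := isHermitian_conjTranspose_mul_self X
  have hroots := congrArg Polynomial.roots (charpoly_mul_comm' X Xᴴ)
  rw [roots_mul ((monic_X_pow _).mul (charpoly_monic _)).ne_zero,
    roots_mul ((monic_X_pow _).mul (charpoly_monic _)).ne_zero, roots_X_pow, roots_X_pow,
    hXX.roots_charpoly_eq_eigenvalues, hXX'.roots_charpoly_eq_eigenvalues] at hroots
  have hsum := congrArg (fun s => (s.map fun z : 𝕜 => (f (RCLike.re z) : 𝕜)).sum) hroots
  simp only [Multiset.map_add, Multiset.sum_add, Multiset.map_nsmul, Multiset.map_singleton,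
    map_zero, hf, Multiset.sum_nsmul, Multiset.sum_singleton, smul_zero,
    zero_add, Multiset.map_map, Function.comp_def, RCLike.ofReal_re] at hsum
  rw [hXX.trace_cfc, hXX'.trace_cfc]
  exact hsum

lemma of_norm_sq_mem_doublyStochastic {W : Matrix n n 𝕜} (hW : W ∈ unitaryGroup n 𝕜) :
    of (fun i j => ‖W i j‖ ^ 2) ∈ doublyStochastic ℝ n := by
  have hrow (i : n) := congrFun (congrFun (mem_unitaryGroup_iff.mp hW) i) i
  have hcol (j : n) := congrFun (congrFun (mem_unitaryGroup_iff'.mp hW) j) j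
  simp only [mul_apply, star_apply, RCLike.star_def, RCLike.mul_conj, RCLike.conj_mul,
    one_apply_eq] at hrow hcol
  refine mem_doublyStochastic_iff_sum.mpr ⟨fun i j => sq_nonneg _, fun i => ?_, fun j => ?_⟩
  · exact_mod_cast hrow i
  · exact_mod_cast hcol j

lemma re_mul_diagonal_mul_star_apply_self (W : Matrix n n 𝕜) (μ : n → ℝ) (i : n) :
    RCLike.re ((W * diagonal (RCLike.ofReal ∘ μ : n → 𝕜) * star W) i i)
      = ∑ j, ‖W i j‖ ^ 2 * μ j := by
  rw [mul_apply, map_sum]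
  simp only [mul_diagonal, star_apply, RCLike.star_def, Function.comp_apply]
  refine Finset.sum_congr rfl fun j _ => ?_
  rw [mul_right_comm, RCLike.mul_conj, ← RCLike.ofReal_pow, ← RCLike.ofReal_mul,
    RCLike.ofReal_re, mul_comm]

lemma IsHermitian.sum_diag_conj_le_re_trace_cfc {A : Matrix n n 𝕜} (hA : A.IsHermitian) {s : Set ℝ}
    {f : ℝ → ℝ} (hf : ConvexOn ℝ s f) (hs : ∀ i, hA.eigenvalues i ∈ s) {V : Matrix n n 𝕜}
    (hV : V ∈ unitaryGroup n 𝕜) :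
    ∑ i, f (RCLike.re ((star V * A * V) i i)) ≤ RCLike.re (cfc f A).trace := by
  set W := star V * (hA.eigenvectorUnitary : Matrix n n 𝕜)
  have hW : W ∈ unitaryGroup n 𝕜 := mul_mem (Unitary.star_mem hV) hA.eigenvectorUnitary.2
  have hconj : star V * A * V = W * diagonal (RCLike.ofReal ∘ hA.eigenvalues) * star W := by
    conv_lhs => rw [hA.spectral_theorem, Unitary.conjStarAlgAut_apply]
    simp only [W, star_mul, star_star, Matrix.mul_assoc]
  have hstoch := of_norm_sq_mem_doublyStochastic hW
  calc ∑ i, f (RCLike.re ((star V * A * V) i i))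
      = ∑ i, f (∑ j, ‖W i j‖ ^ 2 • hA.eigenvalues j) := by
        simp only [hconj, re_mul_diagonal_mul_star_apply_self, smul_eq_mul]
    _ ≤ ∑ i, ∑ j, ‖W i j‖ ^ 2 • f (hA.eigenvalues j) := by
        gcongr with i
        exact hf.map_sum_le (fun j _ => by positivity)
          ((mem_doublyStochastic_iff_sum.mp hstoch).2.1 i) (fun j _ => hs j)
    _ = ∑ j, f (hA.eigenvalues j) := sum_mulVec_of_mem_doublyStochastic hstoch
    _ = RCLike.re (cfc f A).trace := by simp [hA.trace_cfc]

lemma fromBlocks_mem_unitaryGroup {U : Matrix m m 𝕜} {V : Matrix n n 𝕜}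
    (hU : U ∈ unitaryGroup m 𝕜) (hV : V ∈ unitaryGroup n 𝕜) :
    fromBlocks U 0 0 V ∈ unitaryGroup (m ⊕ n) 𝕜 := by
  rw [mem_unitaryGroup_iff, star_fromBlocks_zero_zero, fromBlocks_multiply,
    mem_unitaryGroup_iff.mp hU, mem_unitaryGroup_iff.mp hV]
  simp

lemma IsHermitian.re_trace_cfc_add_le_fromBlocks {P : Matrix m m 𝕜} {Q : Matrix m n 𝕜}
    {R : Matrix n m 𝕜} {S : Matrix n n 𝕜} (hM : (Matrix.fromBlocks P Q R S).IsHermitian)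
    {s : Set ℝ} {f : ℝ → ℝ} (hf : ConvexOn ℝ s f) (hs : ∀ i, hM.eigenvalues i ∈ s) :
    RCLike.re (cfc f P).trace + RCLike.re (cfc f S).trace
      ≤ RCLike.re (cfc f (Matrix.fromBlocks P Q R S)).trace := by
  obtain ⟨hP, -, -, hS⟩ := isHermitian_fromBlocks_iff.mp hM
  set UP := (hP.eigenvectorUnitary : Matrix m m 𝕜)
  set US := (hS.eigenvectorUnitary : Matrix n n 𝕜)
  have hconj : star (Matrix.fromBlocks UP 0 0 US) * Matrix.fromBlocks P Q R S
        * Matrix.fromBlocks UP 0 0 US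
      = Matrix.fromBlocks (diagonal (RCLike.ofReal ∘ hP.eigenvalues)) (star UP * Q * US)
          (star US * R * UP) (diagonal (RCLike.ofReal ∘ hS.eigenvalues)) := by
    rw [← hP.conjStarAlgAut_star_eigenvectorUnitary, ← hS.conjStarAlgAut_star_eigenvectorUnitary,
      star_fromBlocks_zero_zero, fromBlocks_multiply, fromBlocks_multiply]
    simp [UP, US, Matrix.mul_assoc]
  have h := hM.sum_diag_conj_le_re_trace_cfc hf hs
    (fromBlocks_mem_unitaryGroup hP.eigenvectorUnitary.2 hS.eigenvectorUnitary.2)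
  rw [hconj, Fintype.sum_sum_type] at h
  simpa [hP.trace_cfc, hS.trace_cfc] using h

lemma convexOn_re_trace_cfc {f : ℝ → ℝ} (hf : ConvexOn ℝ (Set.Ici 0) f) :
    ConvexOn ℝ {P : Matrix n n 𝕜 | P.PosSemidef} fun P => RCLike.re (cfc f P).trace := by
  refine ⟨convex_setOf_posSemidef, fun P hP Q hQ a b ha hb hab => ?_⟩
  have hM : (a • P + b • Q).PosSemidef := convex_setOf_posSemidef hP hQ ha hb hab
  set U := hM.isHermitian.eigenvectorUnitary
  have hdiag (i : n) : hM.isHermitian.eigenvalues i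
      = a * RCLike.re ((star (U : Matrix n n 𝕜) * P * U) i i)
        + b * RCLike.re ((star (U : Matrix n n 𝕜) * Q * U) i i) := by
    have h := congrArg RCLike.re
      (congrFun (congrFun hM.isHermitian.conjStarAlgAut_star_eigenvectorUnitary i) i)
    rw [Unitary.conjStarAlgAut_star_apply] at h
    simpa [Matrix.mul_add, Matrix.add_mul, RCLike.smul_re] using h.symm
  have hPU := (hP.conjTranspose_mul_mul_same (U : Matrix n n 𝕜)).re_diag_nonneg
  have hQU := (hQ.conjTranspose_mul_mul_same (U : Matrix n n 𝕜)).re_diag_nonneg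
  simp only [star_eq_conjTranspose] at hdiag
  calc RCLike.re (cfc f (a • P + b • Q)).trace
      = ∑ i, f (hM.isHermitian.eigenvalues i) := by simp [hM.isHermitian.trace_cfc]
    _ ≤ ∑ i, (a * f (RCLike.re (((U : Matrix n n 𝕜)ᴴ * P * U) i i))
          + b * f (RCLike.re (((U : Matrix n n 𝕜)ᴴ * Q * U) i i))) := by
        gcongr with i
        rw [hdiag]
        exact hf.2 (Set.mem_Ici.mpr (hPU i)) (Set.mem_Ici.mpr (hQU i)) ha hb hab
    _ ≤ a * RCLike.re (cfc f P).trace + b * RCLike.re (cfc f Q).trace := by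
        rw [Finset.sum_add_distrib, ← Finset.mul_sum, ← Finset.mul_sum]
        have hU := U.2
        gcongr
        · exact hP.isHermitian.sum_diag_conj_le_re_trace_cfc hf hP.eigenvalues_nonneg hU
        · exact hQ.isHermitian.sum_diag_conj_le_re_trace_cfc hf hQ.eigenvalues_nonneg hU

lemma PosSemidef.re_trace_cfc_rpow_smul {X : Matrix n n 𝕜} (hX : X.PosSemidef) {c : ℝ}
    (hc : 0 ≤ c) (r : ℝ) :
    RCLike.re (cfc (fun x : ℝ => x ^ r) (c • X)).trace
      = c ^ r * RCLike.re (cfc (fun x : ℝ => x ^ r) X).trace := by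
  have hcomp : cfc (fun x : ℝ => x ^ r) (c • X) = cfc (fun x : ℝ => (c * x) ^ r) X :=
    (cfc_comp_smul (R := ℝ) c _ X ((X.finite_real_spectrum.image _).continuousOn _)
      hX.isHermitian).symm
  rw [hcomp, hX.isHermitian.trace_cfc, hX.isHermitian.trace_cfc]
  simp [Real.mul_rpow hc (hX.eigenvalues_nonneg _), Finset.mul_sum]

lemma re_trace_cfc_conjTranspose_mul_add_le {k : Type*} [Fintype k] [DecidableEq k]
    {f : ℝ → ℝ} (hf : ConvexOn ℝ (Set.Ici 0) f) (hf0 : f 0 = 0)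
    (C : Matrix k m 𝕜) (D : Matrix k n 𝕜) :
    RCLike.re (cfc f (Cᴴ * C)).trace + RCLike.re (cfc f (Dᴴ * D)).trace
      ≤ RCLike.re (cfc f (C * Cᴴ + D * Dᴴ)).trace := by
  set Z := fromRows Cᴴ Dᴴ
  have hZZ : Z * Zᴴ = fromBlocks (Cᴴ * C) (Cᴴ * D) (Dᴴ * C) (Dᴴ * D) := by
    simp [Z, conjTranspose_fromRows_eq_fromCols_conjTranspose]
  have hZZ' : Zᴴ * Z = C * Cᴴ + D * Dᴴ := by
    simp [Z, conjTranspose_fromRows_eq_fromCols_conjTranspose, fromCols_mul_fromRows]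
  have hM : (fromBlocks (Cᴴ * C) (Cᴴ * D) (Dᴴ * C) (Dᴴ * D)).PosSemidef :=
    hZZ ▸ posSemidef_self_mul_conjTranspose Z
  calc _ ≤ RCLike.re (cfc f (fromBlocks (Cᴴ * C) (Cᴴ * D) (Dᴴ * C) (Dᴴ * D))).trace :=
        hM.isHermitian.re_trace_cfc_add_le_fromBlocks hf hM.eigenvalues_nonneg
    _ = RCLike.re (cfc f (C * Cᴴ + D * Dᴴ)).trace := by
        rw [← hZZ, trace_cfc_self_mul_conjTranspose_eq Z hf0, hZZ']

end Matrix

lemma schattenPowNorm_eq_re_trace_cfc_self_mul_conjTranspose {d : Type*} [Fintype d]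
    [DecidableEq d] {p : ℝ} (hp : p ≠ 0) (X : Matrix d d ℂ) :
    schattenPowNorm p X = RCLike.re (cfc (fun x : ℝ => x ^ (p / 2)) (X * Xᴴ)).trace := by
  rw [schattenPowNorm, trace_cfc_self_mul_conjTranspose_eq (f := fun x : ℝ => x ^ (p / 2)) X
    (Real.zero_rpow (div_ne_zero hp two_ne_zero))]
  rfl

theorem schatten_clarkson
    {d : Type*} [Fintype d] [DecidableEq d]
    (A B : Matrix d d ℂ) (p : ℝ) (hp : 2 ≤ p) :
    schattenPowNorm p (A + B) + schattenPowNorm p (A - B)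
      ≤ 2 ^ (p - 1) * (schattenPowNorm p A + schattenPowNorm p B) := by
  have hp0 : 0 < p := by linarith
  have hf : ConvexOn ℝ (Set.Ici 0) fun x : ℝ => x ^ (p / 2) := convexOn_rpow (by linarith)
  have hf0 : (0 : ℝ) ^ (p / 2) = 0 := Real.zero_rpow (by positivity)
  have hparallelogram : (A + B) * (A + B)ᴴ + (A - B) * (A - B)ᴴ
      = (1 / 2 : ℝ) • ((4 : ℝ) • (A * Aᴴ)) + (1 / 2 : ℝ) • ((4 : ℝ) • (B * Bᴴ)) := by
    simp only [conjTranspose_add, conjTranspose_sub, Matrix.add_mul, Matrix.mul_add,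
      Matrix.sub_mul, Matrix.mul_sub]
    module
  have hconst : (1 / 2 : ℝ) * 4 ^ (p / 2) = 2 ^ (p - 1) := by
    rw [Real.rpow_sub_one two_ne_zero, show (4 : ℝ) = 2 ^ (2 : ℝ) by norm_num,
      ← Real.rpow_mul zero_le_two]
    ring_nf
  have hPA := posSemidef_self_mul_conjTranspose A
  have hPB := posSemidef_self_mul_conjTranspose B
  calc schattenPowNorm p (A + B) + schattenPowNorm p (A - B)
      ≤ RCLike.re
          (cfc (fun x : ℝ => x ^ (p / 2)) ((A + B) * (A + B)ᴴ + (A - B) * (A - B)ᴴ)).trace :=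
        re_trace_cfc_conjTranspose_mul_add_le hf hf0 (A + B) (A - B)
    _ ≤ 1 / 2 * RCLike.re (cfc (fun x : ℝ => x ^ (p / 2)) ((4 : ℝ) • (A * Aᴴ))).trace
          + 1 / 2 * RCLike.re (cfc (fun x : ℝ => x ^ (p / 2)) ((4 : ℝ) • (B * Bᴴ))).trace := by
        rw [hparallelogram]
        exact (convexOn_re_trace_cfc hf).2 (hPA.smul zero_le_four) (hPB.smul zero_le_four)
          (by norm_num) (by norm_num) (by norm_num)
    _ = 2 ^ (p - 1) * (schattenPowNorm p A + schattenPowNorm p B) := by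
        rw [hPA.re_trace_cfc_rpow_smul zero_le_four, hPB.re_trace_cfc_rpow_smul zero_le_four,
          ← schattenPowNorm_eq_re_trace_cfc_self_mul_conjTranspose hp0.ne',
          ← schattenPowNorm_eq_re_trace_cfc_self_mul_conjTranspose hp0.ne', ← hconst]
        ring
end
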